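/- arXiv:1302.5021 — 2 statements merged into one kernel-verified Lean document; each statement's English description precedes it below -/
import Mathlib

section
/- There exists a unique strictly increasing chain of subspaces {0} = W^(0) ⊊ W^(1) ⊊ ... ⊊ W^(r) = V such that for each j: (1) among all subspaces strictly containing W^(j-1), W^(j) has the least normalized conditional entropy conditioned on W^(j-1); (2) any other subspace strictly containing W^(j-1) achieving this minimum is strictly contained in W^(j). Moreover, the minimal normalized conditional entropies are strictly increasing along the chain: H_N(W^(1)|W^(0)) < H_N(W^(2)|W^(1)) < ... < H_N(W^(r)|W^(r-1)). -/
open scoped BigOperators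

open Classical in
noncomputable def prb {Ω : Type*} {β : Type*} [Fintype Ω] (p : Ω → ℝ) (f : Ω → β) (b : β) : ℝ :=
  ∑ ω ∈ Finset.univ.filter (fun ω => f ω = b), p ω

open Classical in
/-- Base-2 Shannon entropy of the random variable `f` on the finite probability
space `(Ω, p)`. -/
noncomputable def mapEnt {Ω β : Type*} [Fintype Ω] [Fintype β]
    (p : Ω → ℝ) (f : Ω → β) : ℝ :=
  ∑ b : β, -((∑ ω ∈ Finset.univ.filter (fun ω => f ω = b), p ω) *
      Real.logb 2 (∑ ω ∈ Finset.univ.filter (fun ω => f ω = b), p ω))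

section Ent
variable {Ω : Type*} [Fintype Ω] (p : Ω → ℝ)

lemma mapEnt_def' {β : Type*} [Fintype β] (f : Ω → β) :
    mapEnt p f = ∑ b : β, -(prb p f b * Real.logb 2 (prb p f b)) := rfl

lemma prb_nonneg (hp : ∀ ω, 0 ≤ p ω) {β : Type*} (f : Ω → β) (b : β) : 0 ≤ prb p f b :=
  Finset.sum_nonneg fun ω _ => hp ω

lemma prb_le_prb (hp : ∀ ω, 0 ≤ p ω) {β γ : Type*} {f : Ω → β} {g : Ω → γ} {b : β} {c : γ}
    (h : ∀ ω, f ω = b → g ω = c) : prb p f b ≤ prb p g c := by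
  classical
  apply Finset.sum_le_sum_of_subset_of_nonneg
  · intro ω hw
    simp only [Finset.mem_filter, Finset.mem_univ, true_and] at *
    exact h ω hw
  · exact fun ω _ _ => hp ω

lemma sum_prb {β : Type*} [Fintype β] (f : Ω → β) : ∑ b, prb p f b = ∑ ω, p ω := by
  classical
  exact Finset.sum_fiberwise Finset.univ f p

open Classical in
lemma prb_comp {β γ : Type*} [Fintype γ] (g : Ω → γ) (φ : γ → β) (f : Ω → β)
    (hf : ∀ ω, f ω = φ (g ω)) (b : β) :
    prb p f b = ∑ c ∈ Finset.univ.filter (fun c => φ c = b), prb p g c := by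
  classical
  unfold prb
  rw [Finset.sum_fiberwise_eq_sum_filter Finset.univ (Finset.univ.filter fun c => φ c = b) g p]
  apply Finset.sum_congr _ fun _ _ => rfl
  ext ω
  simp [hf ω]

lemma prb_pair_fst {β γ : Type*} [Fintype γ] (f : Ω → β) (g : Ω → γ) (b : β) :
    prb p f b = ∑ c, prb p (fun ω => (f ω, g ω)) (b, c) := by
  classical
  unfold prb
  rw [← Finset.sum_fiberwise (Finset.univ.filter fun ω => f ω = b) g p]
  apply Finset.sum_congr rfl
  intro c _
  apply Finset.sum_congr _ fun _ _ => rfl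
  ext ω
  simp only [Finset.mem_filter, Finset.mem_univ, true_and, Prod.mk.injEq]

lemma prb_pair_snd {β γ : Type*} [Fintype β] (f : Ω → β) (g : Ω → γ) (c : γ) :
    prb p g c = ∑ b, prb p (fun ω => (f ω, g ω)) (b, c) := by
  classical
  unfold prb
  rw [← Finset.sum_fiberwise (Finset.univ.filter fun ω => g ω = c) f p]
  apply Finset.sum_congr rfl
  intro b _
  apply Finset.sum_congr _ fun _ _ => rfl
  ext ω
  simp only [Finset.mem_filter, Finset.mem_univ, true_and, Prod.mk.injEq]
  tauto

lemma negmul_sum_le {γ : Type*} (s : Finset γ) (q : γ → ℝ) (hq : ∀ c ∈ s, 0 ≤ q c) :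
    -((∑ c ∈ s, q c) * Real.logb 2 (∑ c ∈ s, q c)) ≤
      ∑ c ∈ s, -(q c * Real.logb 2 (q c)) := by
  have hQ : ∀ c ∈ s, q c ≤ ∑ c ∈ s, q c := fun c hc => Finset.single_le_sum hq hc
  rw [Finset.sum_mul, ← Finset.sum_neg_distrib]
  apply Finset.sum_le_sum
  intro c hc
  rcases eq_or_lt_of_le (hq c hc) with h0 | h0
  · simp [← h0]
  · have : Real.logb 2 (q c) ≤ Real.logb 2 (∑ c ∈ s, q c) :=
      Real.logb_le_logb_of_le (by norm_num) h0 (hQ c hc)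
    nlinarith

lemma mapEnt_comp_le (hp : ∀ ω, 0 ≤ p ω) {β γ : Type*} [Fintype β] [Fintype γ]
    (g : Ω → γ) (φ : γ → β) (f : Ω → β) (hf : ∀ ω, f ω = φ (g ω)) :
    mapEnt p f ≤ mapEnt p g := by
  classical
  rw [mapEnt_def', mapEnt_def',
    ← Finset.sum_fiberwise Finset.univ φ (fun c => -(prb p g c * Real.logb 2 (prb p g c)))]
  apply Finset.sum_le_sum
  intro b _
  rw [prb_comp p g φ f hf b]
  exact negmul_sum_le _ _ fun c _ => prb_nonneg p hp g c

lemma mapEnt_nonneg (hp : ∀ ω, 0 ≤ p ω) (hpsum : ∑ ω, p ω = 1)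
    {β : Type*} [Fintype β] (f : Ω → β) : 0 ≤ mapEnt p f := by
  rw [mapEnt_def']
  apply Finset.sum_nonneg
  intro b _
  have h0 := prb_nonneg p hp f b
  have h1 : prb p f b ≤ 1 := by
    rw [← hpsum, ← sum_prb p f]
    exact Finset.single_le_sum (fun c _ => prb_nonneg p hp f c) (Finset.mem_univ b)
  have := Real.logb_nonpos (b := 2) (by norm_num) h0 h1
  nlinarith

lemma mapEnt_submodular (hp : ∀ ω, 0 ≤ p ω) (hpsum : ∑ ω, p ω = 1)
    {β γ δ : Type*} [Fintype β] [Fintype γ] [Fintype δ]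
    (f : Ω → β) (g : Ω → γ) (k : Ω → δ) (φ : β → δ) (ψ : γ → δ)
    (hφ : ∀ ω, k ω = φ (f ω)) (hψ : ∀ ω, k ω = ψ (g ω)) :
    mapEnt p (fun ω => (f ω, g ω)) + mapEnt p k ≤ mapEnt p f + mapEnt p g := by
  classical
  set j : Ω → β × γ := fun ω => (f ω, g ω) with hj
  set r : β × γ → ℝ := prb p j with hr
  set q : β → ℝ := prb p f with hq
  set s : γ → ℝ := prb p g with hs
  set t : δ → ℝ := prb p k with ht
  have hr0 : ∀ x, 0 ≤ r x := fun x => prb_nonneg p hp j x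
  have hq0 : ∀ b, 0 ≤ q b := fun b => prb_nonneg p hp f b
  have hs0 : ∀ c, 0 ≤ s c := fun c => prb_nonneg p hp g c
  have ht0 : ∀ a, 0 ≤ t a := fun a => prb_nonneg p hp k a
  have hqr : ∀ b, q b = ∑ c, r (b, c) := fun b => prb_pair_fst p f g b
  have hsr : ∀ c, s c = ∑ b, r (b, c) := fun c => prb_pair_snd p f g c
  -- rewrite the four entropies as sums over β × γ
  have hEf : mapEnt p f = ∑ x : β × γ, -(r x * Real.logb 2 (q x.1)) := by
    rw [mapEnt_def', Fintype.sum_prod_type]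
    apply Finset.sum_congr rfl
    intro b _
    show -(q b * Real.logb 2 (q b)) = _
    nth_rewrite 1 [hqr b]
    rw [Finset.sum_mul, ← Finset.sum_neg_distrib]
  have hEg : mapEnt p g = ∑ x : β × γ, -(r x * Real.logb 2 (s x.2)) := by
    rw [mapEnt_def', Fintype.sum_prod_type_right]
    apply Finset.sum_congr rfl
    intro c _
    show -(s c * Real.logb 2 (s c)) = _
    nth_rewrite 1 [hsr c]
    rw [Finset.sum_mul, ← Finset.sum_neg_distrib]
  have hEj : mapEnt p j = ∑ x : β × γ, -(r x * Real.logb 2 (r x)) := mapEnt_def' p j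
  have htq : ∀ a, t a = ∑ b ∈ Finset.univ.filter (fun b => φ b = a), q b :=
    fun a => prb_comp p f φ k hφ a
  have hEk : mapEnt p k = ∑ x : β × γ, -(r x * Real.logb 2 (t (φ x.1))) := by
    have step1 : mapEnt p k = ∑ b : β, -(q b * Real.logb 2 (t (φ b))) := by
      rw [mapEnt_def',
        ← Finset.sum_fiberwise Finset.univ φ (fun b => -(q b * Real.logb 2 (t (φ b))))]
      apply Finset.sum_congr rfl
      intro a _
      show -(t a * Real.logb 2 (t a)) = _
      nth_rewrite 1 [htq a]
      rw [Finset.sum_mul, ← Finset.sum_neg_distrib]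
      apply Finset.sum_congr rfl
      intro b hb
      simp only [Finset.mem_filter] at hb
      rw [hb.2]
    rw [step1, Fintype.sum_prod_type]
    apply Finset.sum_congr rfl
    intro b _
    nth_rewrite 1 [hqr b]
    rw [Finset.sum_mul, ← Finset.sum_neg_distrib]
  -- the comparison function
  set u : β × γ → ℝ := fun x => if ψ x.2 = φ x.1 then q x.1 * s x.2 / t (φ x.1) else 0 with hu
  have hu0 : ∀ x, 0 ≤ u x := by
    intro x
    rw [hu]
    dsimp only
    split
    · exact div_nonneg (mul_nonneg (hq0 _) (hs0 _)) (ht0 _)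
    · exact le_rfl
  -- pointwise bound
  have key : ∀ x : β × γ,
      -(r x * Real.logb 2 (r x)) + -(r x * Real.logb 2 (t (φ x.1)))
        - -(r x * Real.logb 2 (q x.1)) - -(r x * Real.logb 2 (s x.2))
        ≤ (u x - r x) / Real.log 2 := by
    intro x
    rcases eq_or_lt_of_le (hr0 x) with h0 | h0
    · rw [← h0]
      simp only [neg_zero, zero_mul, neg_mul, sub_zero, add_zero, sub_self]
      have : 0 ≤ u x / Real.log 2 := div_nonneg (hu0 x) (Real.log_nonneg (by norm_num))
      simpa using this
    · -- r x > 0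
      have hrq : r x ≤ q x.1 := prb_le_prb p hp (fun ω h => by rw [hj] at h; simp only at h; rw [← h])
      have hrs : r x ≤ s x.2 := prb_le_prb p hp (fun ω h => by rw [hj] at h; simp only at h; rw [← h])
      have hqt : q x.1 ≤ t (φ x.1) := prb_le_prb p hp (fun ω h => by rw [hφ ω, h])
      have hqpos : 0 < q x.1 := lt_of_lt_of_le h0 hrq
      have hspos : 0 < s x.2 := lt_of_lt_of_le h0 hrs
      have htpos : 0 < t (φ x.1) := lt_of_lt_of_le hqpos hqt
      -- fibers nonempty forces compatibility
      have hcompat : ψ x.2 = φ x.1 := by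
        have hne : r x ≠ 0 := ne_of_gt h0
        rw [hr] at hne
        obtain ⟨ω, hω, -⟩ := Finset.exists_ne_zero_of_sum_ne_zero hne
        simp only [Finset.mem_filter, Finset.mem_univ, true_and] at hω
        have h1 : f ω = x.1 := by rw [hj] at hω; exact congrArg Prod.fst hω
        have h2 : g ω = x.2 := by rw [hj] at hω; exact congrArg Prod.snd hω
        rw [← h1, ← h2, ← hφ ω, ← hψ ω]
      have huval : u x = q x.1 * s x.2 / t (φ x.1) := by rw [hu]; simp [hcompat]
      set z : ℝ := q x.1 * s x.2 / (r x * t (φ x.1)) with hz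
      have hzpos : 0 < z := by positivity
      have hlog : Real.log z ≤ z - 1 := Real.log_le_sub_one_of_pos hzpos
      have hlogb : Real.logb 2 (q x.1) + Real.logb 2 (s x.2) - Real.logb 2 (r x)
          - Real.logb 2 (t (φ x.1)) = Real.log z / Real.log 2 := by
        rw [hz, Real.logb, Real.logb, Real.logb, Real.logb,
          Real.log_div (by positivity) (by positivity),
          Real.log_mul (ne_of_gt hqpos) (ne_of_gt hspos),
          Real.log_mul (ne_of_gt h0) (ne_of_gt htpos)]
        ring
      have hlhs : -(r x * Real.logb 2 (r x)) + -(r x * Real.logb 2 (t (φ x.1)))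
          - -(r x * Real.logb 2 (q x.1)) - -(r x * Real.logb 2 (s x.2))
          = r x * (Real.log z / Real.log 2) := by rw [← hlogb]; ring
      rw [hlhs, huval]
      have hlog2 : 0 < Real.log 2 := Real.log_pos (by norm_num)
      have h1 : r x * Real.log z ≤ r x * (z - 1) :=
        mul_le_mul_of_nonneg_left hlog (le_of_lt h0)
      have h2 : r x * (z - 1) = q x.1 * s x.2 / t (φ x.1) - r x := by
        rw [hz]
        field_simp
      calc r x * (Real.log z / Real.log 2) = r x * Real.log z / Real.log 2 := by ring
        _ ≤ r x * (z - 1) / Real.log 2 := by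
            rw [div_le_div_iff₀ hlog2 hlog2]
            nlinarith [mul_le_mul_of_nonneg_right h1 hlog2.le]
        _ = (q x.1 * s x.2 / t (φ x.1) - r x) / Real.log 2 := by rw [h2]
  -- sum the pointwise bound
  have hsum_r : ∑ x : β × γ, r x = 1 := by rw [hr, sum_prb p j, hpsum]
  have hts : ∀ a, t a = ∑ c ∈ Finset.univ.filter (fun c => ψ c = a), s c :=
    fun a => prb_comp p g ψ k hψ a
  have hsum_u : ∑ x : β × γ, u x ≤ 1 := by
    calc ∑ x : β × γ, u x = ∑ b, ∑ c, u (b, c) := Fintype.sum_prod_type _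
      _ ≤ ∑ b, q b := by
          apply Finset.sum_le_sum
          intro b _
          have e1 : ∑ c, u (b, c) =
              ∑ c ∈ Finset.univ.filter (fun c => ψ c = φ b), q b * s c / t (φ b) := by
            rw [Finset.sum_filter]
          rw [e1]
          have e2 : ∀ c, q b * s c / t (φ b) = s c * (q b / t (φ b)) := fun c => by ring
          rw [Finset.sum_congr rfl fun c _ => e2 c, ← Finset.sum_mul, ← hts (φ b)]
          rcases eq_or_ne (t (φ b)) 0 with h | h
          · rw [h]
            simpa using hq0 b
          · rw [mul_comm, div_mul_cancel₀ _ h]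
      _ = 1 := by rw [← hpsum, hq, sum_prb p f]
  rw [hEj, hEk, hEf, hEg]
  have hbig : ∑ x : β × γ, (-(r x * Real.logb 2 (r x)) + -(r x * Real.logb 2 (t (φ x.1)))
      - -(r x * Real.logb 2 (q x.1)) - -(r x * Real.logb 2 (s x.2)))
      ≤ ∑ x : β × γ, (u x - r x) / Real.log 2 :=
    Finset.sum_le_sum fun x _ => key x
  have hA : ∑ x : β × γ, (u x - r x) / Real.log 2 ≤ 0 := by
    rw [← Finset.sum_div, Finset.sum_sub_distrib, hsum_r]
    have hlog2 : 0 < Real.log 2 := Real.log_pos (by norm_num)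
    apply div_nonpos_of_nonpos_of_nonneg _ hlog2.le
    linarith
  have hexp : ∑ x : β × γ, (-(r x * Real.logb 2 (r x)) + -(r x * Real.logb 2 (t (φ x.1)))
      - -(r x * Real.logb 2 (q x.1)) - -(r x * Real.logb 2 (s x.2)))
      = (∑ x : β × γ, -(r x * Real.logb 2 (r x)))
        + (∑ x : β × γ, -(r x * Real.logb 2 (t (φ x.1))))
        - (∑ x : β × γ, -(r x * Real.logb 2 (q x.1)))
        - (∑ x : β × γ, -(r x * Real.logb 2 (s x.2))) := by
    rw [Finset.sum_sub_distrib, Finset.sum_sub_distrib, Finset.sum_add_distrib]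
  linarith

end Ent

open Classical in
/-- Entropy of a subspace `U` of the space of `F`-valued random variables on `Ω`:
the joint entropy of the collection of all random variables in `U` (equivalently,
of any generating set). -/
noncomputable def subEnt {F Ω : Type*} [Field F] [Fintype F] [Fintype Ω]
    (p : Ω → ℝ) (U : Submodule F (Ω → F)) : ℝ :=
  mapEnt p (fun ω => (fun u : U => (u : Ω → F) ω))

/-- Normalized conditional entropy `H_N(U|W) = (H(W+U) - H(W)) / (dim(W+U) - dim W)`. -/
noncomputable def condNE {F Ω : Type*} [Field F] [Fintype F] [Fintype Ω]
    (p : Ω → ℝ) (U W : Submodule F (Ω → F)) : ℝ :=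
  (subEnt p (W ⊔ U) - subEnt p W) /
    ((Module.finrank F ↥(W ⊔ U) : ℝ) - (Module.finrank F ↥W : ℝ))

section Sub
variable {F Ω : Type*} [Field F] [Fintype F] [Fintype Ω] (p : Ω → ℝ)

open Classical in
lemma subEnt_mono (hp : ∀ ω, 0 ≤ p ω) {A B : Submodule F (Ω → F)} (h : A ≤ B) :
    subEnt p A ≤ subEnt p B := by
  classical
  exact mapEnt_comp_le p hp (fun ω => (fun u : B => (u : Ω → F) ω))
    (fun v => fun a : A => v ⟨a.1, h a.2⟩)
    (fun ω => (fun u : A => (u : Ω → F) ω)) (fun ω => rfl)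

open Classical in
lemma subEnt_eq_mapEnt (U : Submodule F (Ω → F)) :
    subEnt p U = mapEnt p (fun ω => (fun u : U => (u : Ω → F) ω)) := rfl

open Classical in
lemma subEnt_submodular (hp : ∀ ω, 0 ≤ p ω) (hpsum : ∑ ω, p ω = 1)
    (A B : Submodule F (Ω → F)) :
    subEnt p (A ⊔ B) + subEnt p (A ⊓ B) ≤ subEnt p A + subEnt p B := by
  classical
  have dec : ∀ u : ↥(A ⊔ B), ∃ y ∈ A, ∃ z ∈ B, y + z = (u : Ω → F) :=
    fun u => Submodule.mem_sup.mp u.2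
  choose ya hya za hza hsum using dec
  have step2 := mapEnt_submodular p hp hpsum
      (fun ω => (fun u : A => (u : Ω → F) ω))
      (fun ω => (fun u : B => (u : Ω → F) ω))
      (fun ω => (fun u : ↥(A ⊓ B) => (u : Ω → F) ω))
      (fun v => fun u : ↥(A ⊓ B) => v ⟨u.1, u.2.1⟩)
      (fun v => fun u : ↥(A ⊓ B) => v ⟨u.1, u.2.2⟩)
      (fun ω => rfl) (fun ω => rfl)
  have step1 := mapEnt_comp_le p hp
      (fun ω => ((fun u : A => (u : Ω → F) ω), (fun u : B => (u : Ω → F) ω)))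
      (fun x => fun u : ↥(A ⊔ B) => x.1 ⟨ya u, hya u⟩ + x.2 ⟨za u, hza u⟩)
      (fun ω => (fun u : ↥(A ⊔ B) => (u : Ω → F) ω))
      (by
        intro ω
        funext u
        show (u : Ω → F) ω = ya u ω + za u ω
        conv_lhs => rw [← hsum u]
        rfl)
  rw [subEnt_eq_mapEnt, subEnt_eq_mapEnt, subEnt_eq_mapEnt, subEnt_eq_mapEnt]
  linarith

omit [Fintype F] in
lemma finrank_gap_pos {U W : Submodule F (Ω → F)} (h : W < U) :
    (0 : ℝ) < (Module.finrank F ↥U : ℝ) - (Module.finrank F ↥W : ℝ) := by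
  have h1 := Submodule.finrank_lt_finrank_of_lt h
  have h2 := Nat.cast_lt (α := ℝ) |>.mpr h1
  linarith

lemma condNE_of_le {U W : Submodule F (Ω → F)} (h : W ≤ U) :
    condNE p U W = (subEnt p U - subEnt p W) /
      ((Module.finrank F ↥U : ℝ) - (Module.finrank F ↥W : ℝ)) := by
  rw [condNE, sup_eq_right.mpr h]

lemma condNE_mul_gap {U W : Submodule F (Ω → F)} (h : W < U) :
    subEnt p U - subEnt p W = condNE p U W *
      ((Module.finrank F ↥U : ℝ) - (Module.finrank F ↥W : ℝ)) := by
  rw [condNE_of_le p h.le, div_mul_cancel₀]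
  exact ne_of_gt (finrank_gap_pos h)

end Sub

section Chain
variable {F Ω : Type*} [Field F] [Fintype F] [Fintype Ω] (p : Ω → ℝ)

/-- The sup of two minimizers of normalized conditional entropy is a minimizer. -/
lemma sup_minimizer (hp : ∀ ω, 0 ≤ p ω) (hpsum : ∑ ω, p ω = 1)
    {V W U₁ U₂ : Submodule F (Ω → F)} {c : ℝ}
    (h1V : U₁ ≤ V) (h2V : U₂ ≤ V) (hW1 : W < U₁) (hW2 : W < U₂)
    (hc : ∀ U, U ≤ V → W < U → c ≤ condNE p U W)
    (e1 : condNE p U₁ W = c) (e2 : condNE p U₂ W = c) :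
    U₁ ⊔ U₂ ≤ V ∧ W < U₁ ⊔ U₂ ∧ condNE p (U₁ ⊔ U₂) W = c := by
  have hJV : U₁ ⊔ U₂ ≤ V := sup_le h1V h2V
  have hWJ : W < U₁ ⊔ U₂ := lt_of_lt_of_le hW1 le_sup_left
  refine ⟨hJV, hWJ, ?_⟩
  have hWM : W ≤ U₁ ⊓ U₂ := le_inf hW1.le hW2.le
  have hgap1 : subEnt p U₁ - subEnt p W =
      c * ((Module.finrank F ↥U₁ : ℝ) - (Module.finrank F ↥W : ℝ)) := by
    rw [← e1]; exact condNE_mul_gap p hW1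
  have hgap2 : subEnt p U₂ - subEnt p W =
      c * ((Module.finrank F ↥U₂ : ℝ) - (Module.finrank F ↥W : ℝ)) := by
    rw [← e2]; exact condNE_mul_gap p hW2
  have hdim : (Module.finrank F ↥(U₁ ⊔ U₂) : ℝ) + (Module.finrank F ↥(U₁ ⊓ U₂) : ℝ)
      = (Module.finrank F ↥U₁ : ℝ) + (Module.finrank F ↥U₂ : ℝ) := by
    exact_mod_cast Submodule.finrank_sup_add_finrank_inf_eq U₁ U₂
  have hsubm : subEnt p (U₁ ⊔ U₂) + subEnt p (U₁ ⊓ U₂) ≤ subEnt p U₁ + subEnt p U₂ :=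
    subEnt_submodular p hp hpsum U₁ U₂
  have hMgap : c * ((Module.finrank F ↥(U₁ ⊓ U₂) : ℝ) - (Module.finrank F ↥W : ℝ))
      ≤ subEnt p (U₁ ⊓ U₂) - subEnt p W := by
    rcases eq_or_lt_of_le hWM with h | h
    · rw [← h]
      simp
    · have hMV : U₁ ⊓ U₂ ≤ V := le_trans inf_le_left h1V
      have h2 := hc _ hMV h
      have hpos := finrank_gap_pos (F := F) h
      rw [condNE_of_le p h.le, le_div_iff₀ hpos] at h2
      linarith
  have hposJ := finrank_gap_pos (F := F) hWJ
  have hcJ := hc _ hJV hWJ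
  rw [condNE_of_le p hWJ.le]
  rw [condNE_of_le p hWJ.le] at hcJ
  apply le_antisymm
  · rw [div_le_iff₀ hposJ]
    have hkey : c * ((Module.finrank F ↥U₁ : ℝ) - (Module.finrank F ↥W : ℝ))
        + c * ((Module.finrank F ↥U₂ : ℝ) - (Module.finrank F ↥W : ℝ))
        - c * ((Module.finrank F ↥(U₁ ⊓ U₂) : ℝ) - (Module.finrank F ↥W : ℝ))
        = c * ((Module.finrank F ↥(U₁ ⊔ U₂) : ℝ) - (Module.finrank F ↥W : ℝ)) := by
      linear_combination (-c) * hdim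
    linarith
  · exact hcJ

omit [Fintype F] [Fintype Ω] in
lemma submodule_finite : Finite (Submodule F (Ω → F)) → True := fun _ => trivial

/-- Existence of the unique maximal minimizer of normalized conditional entropy. -/
lemma exists_maxmin (hp : ∀ ω, 0 ≤ p ω) (hpsum : ∑ ω, p ω = 1)
    {V W : Submodule F (Ω → F)} (hWV : W < V) :
    ∃ M : Submodule F (Ω → F), M ≤ V ∧ W < M ∧
      (∀ U, U ≤ V → W < U → condNE p M W ≤ condNE p U W) ∧
      (∀ U, U ≤ V → W < U → condNE p U W = condNE p M W → U ≤ M) := by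
  classical
  have hfin : Finite (Submodule F (Ω → F)) :=
    Finite.of_injective (fun U : Submodule F (Ω → F) => (U : Set (Ω → F)))
      SetLike.coe_injective
  -- a minimizer exists
  obtain ⟨U₀, hU₀, hmin⟩ := Set.exists_min_image {U : Submodule F (Ω → F) | U ≤ V ∧ W < U}
    (fun U => condNE p U W) (Set.toFinite _) ⟨V, le_rfl, hWV⟩
  set c := condNE p U₀ W with hcdef
  have hc : ∀ U, U ≤ V → W < U → c ≤ condNE p U W := fun U h1 h2 => hmin U ⟨h1, h2⟩
  haveI : Fintype (Submodule F (Ω → F)) := Fintype.ofFinite _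
  set T : Finset (Submodule F (Ω → F)) :=
    Finset.univ.filter (fun U => (U ≤ V ∧ W < U) ∧ condNE p U W = c) with hT
  have hU₀T : U₀ ∈ T := by
    rw [hT, Finset.mem_filter]
    exact ⟨Finset.mem_univ _, ⟨hU₀.1, hU₀.2⟩, rfl⟩
  have hne : T.Nonempty := ⟨U₀, hU₀T⟩
  set M := T.sup' hne id with hMdef
  have hPM : (M ≤ V ∧ W < M) ∧ condNE p M W = c := by
    apply Finset.sup'_induction (p := fun A => (A ≤ V ∧ W < A) ∧ condNE p A W = c) hne id
    · intro U₁ h1 U₂ h2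
      obtain ⟨⟨h1V, hW1⟩, e1⟩ := h1
      obtain ⟨⟨h2V, hW2⟩, e2⟩ := h2
      obtain ⟨hJV, hWJ, eJ⟩ := sup_minimizer p hp hpsum h1V h2V hW1 hW2 hc e1 e2
      exact ⟨⟨hJV, hWJ⟩, eJ⟩
    · intro U hU
      rw [hT, Finset.mem_filter] at hU
      exact hU.2
  refine ⟨M, hPM.1.1, hPM.1.2, ?_, ?_⟩
  · intro U h1 h2
    rw [hPM.2]
    exact hc U h1 h2
  · intro U h1 h2 he
    have hUT : U ∈ T := by
      rw [hT, Finset.mem_filter]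
      exact ⟨Finset.mem_univ _, ⟨h1, h2⟩, by rw [he, hPM.2]⟩
    exact Finset.le_sup' id hUT

end Chain

/-- `IsNEChain p V r W` says that `⊥ = W 0 ⊊ W 1 ⊊ ... ⊊ W r = V` is a strictly
increasing chain of subspaces of `V` such that for each `j`: (1) among all subspaces
of `V` strictly containing `W j`, `W (j+1)` has the least normalized conditional
entropy conditioned on `W j`, and (2) any subspace of `V` strictly containing `W j`
achieving this minimum is contained in `W (j+1)`. -/
def IsNEChain {F Ω : Type*} [Field F] [Fintype F] [Fintype Ω]
    (p : Ω → ℝ) (V : Submodule F (Ω → F)) (r : ℕ) (W : ℕ → Submodule F (Ω → F)) : Prop :=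
  W 0 = ⊥ ∧ W r = V ∧ (∀ j, j < r → W j < W (j + 1)) ∧ (∀ j, j ≤ r → W j ≤ V) ∧
  ∀ j, j < r →
    (∀ U : Submodule F (Ω → F), U ≤ V → W j < U →
        condNE p (W (j + 1)) (W j) ≤ condNE p U (W j)) ∧
    (∀ U : Submodule F (Ω → F), U ≤ V → W j < U →
        condNE p U (W j) = condNE p (W (j + 1)) (W j) → U ≤ W (j + 1))

/-- Normalized-entropy subspace chain: there is a unique strictly increasing chain
`{0} = W^(0) ⊊ W^(1) ⊊ ... ⊊ W^(r) = V` such that each `W^(j)` is the unique maximal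
minimizer of `H_N(·|W^(j-1))` among subspaces strictly containing `W^(j-1)`; moreover
the minimal normalized conditional entropies strictly increase along the chain. -/
theorem stmt_6 {F Ω : Type*} [Field F] [Fintype F] [Fintype Ω]
    (p : Ω → ℝ) (hp : ∀ ω, 0 ≤ p ω) (hpsum : ∑ ω, p ω = 1)
    {m : ℕ} (X : Fin m → (Ω → F)) (hX : LinearIndependent F X)
    (V : Submodule F (Ω → F)) (hV : V = Submodule.span F (Set.range X)) :
    ∃ r : ℕ, ∃ W : ℕ → Submodule F (Ω → F), IsNEChain p V r W ∧
      (∀ j, j + 1 < r → condNE p (W (j + 1)) (W j) < condNE p (W (j + 2)) (W (j + 1))) ∧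
      ∀ r' : ℕ, ∀ W' : ℕ → Submodule F (Ω → F), IsNEChain p V r' W' →
        r' = r ∧ ∀ j, j ≤ r → W' j = W j := by
  classical
  let step : Submodule F (Ω → F) → Submodule F (Ω → F) := fun W =>
    if h : W < V then (exists_maxmin p hp hpsum h).choose else V
  have step_spec : ∀ W, ∀ h : W < V, step W ≤ V ∧ W < step W ∧
      (∀ U, U ≤ V → W < U → condNE p (step W) W ≤ condNE p U W) ∧
      (∀ U, U ≤ V → W < U → condNE p U W = condNE p (step W) W → U ≤ step W) := by
    intro W h
    have hs := (exists_maxmin p hp hpsum h).choose_spec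
    have he : step W = (exists_maxmin p hp hpsum h).choose := dif_pos h
    rw [he]
    exact hs
  have step_fix : ∀ W : Submodule F (Ω → F), ¬(W < V) → step W = V := fun W h => dif_neg h
  let Wc : ℕ → Submodule F (Ω → F) := fun n => step^[n] ⊥
  have hW0 : Wc 0 = ⊥ := rfl
  have hWsucc : ∀ n, Wc (n + 1) = step (Wc n) := fun n => Function.iterate_succ_apply' step n ⊥
  have hle : ∀ n, Wc n ≤ V := by
    intro n
    induction n with
    | zero => exact bot_le
    | succ n ih =>
      rw [hWsucc]
      by_cases h : Wc n < V
      · exact (step_spec _ h).1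
      · rw [step_fix _ h]
  have hVfix : ∀ n, Wc n = V → Wc (n + 1) = V := by
    intro n h
    rw [hWsucc, h]
    exact step_fix V (lt_irrefl V)
  have hgrow : ∀ n, Wc n ≠ V → Wc n < Wc (n + 1) := by
    intro n h
    have hlt : Wc n < V := lt_of_le_of_ne (hle n) h
    rw [hWsucc]
    exact (step_spec _ hlt).2.1
  have hreach : ∃ n, Wc n = V := by
    have hrank : ∀ n, Wc n = V ∨ n ≤ Module.finrank F (Wc n) := by
      intro n
      induction n with
      | zero => right; exact Nat.zero_le _
      | succ n ih =>
        rcases ih with h | h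
        · left; exact hVfix n h
        · by_cases hv : Wc n = V
          · left; exact hVfix n hv
          · right
            have := Submodule.finrank_lt_finrank_of_lt (hgrow n hv)
            omega
    rcases hrank (Module.finrank F V + 1) with h | h
    · exact ⟨_, h⟩
    · exfalso
      have hle' : Module.finrank F (Wc (Module.finrank F V + 1)) ≤ Module.finrank F V :=
        Submodule.finrank_mono (hle _)
      omega
  set r := Nat.find hreach with hrdef
  have hWr : Wc r = V := Nat.find_spec hreach
  have hWlt : ∀ j, j < r → Wc j < V := fun j hj =>
    lt_of_le_of_ne (hle j) (Nat.find_min hreach hj)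
  have hchain : IsNEChain p V r Wc := by
    refine ⟨hW0, hWr, ?_, fun j _ => hle j, ?_⟩
    · intro j hj
      exact hgrow j (Nat.find_min hreach hj)
    · intro j hj
      have h := step_spec _ (hWlt j hj)
      rw [← hWsucc] at h
      exact ⟨h.2.2.1, h.2.2.2⟩
  refine ⟨r, Wc, hchain, ?_, ?_⟩
  · intro j hj
    have hj1 : j < r := Nat.lt_of_succ_lt hj
    have h0 := step_spec _ (hWlt j hj1)
    rw [← hWsucc] at h0
    have h1 := step_spec _ (hWlt (j + 1) hj)
    rw [← hWsucc] at h1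
    by_contra hcon
    push_neg at hcon
    have h01 : Wc j < Wc (j + 1) := h0.2.1
    have h12 : Wc (j + 1) < Wc (j + 2) := h1.2.1
    have h02 : Wc j < Wc (j + 2) := lt_trans h01 h12
    have hW2V : Wc (j + 2) ≤ V := hle (j + 2)
    have g1 := condNE_mul_gap p h01
    have g2 := condNE_mul_gap p h12
    have hd12 := finrank_gap_pos (F := F) h12
    have hd02 := finrank_gap_pos (F := F) h02
    have hle2 : condNE p (Wc (j + 2)) (Wc j) ≤ condNE p (Wc (j + 1)) (Wc j) := by
      rw [condNE_of_le p h02.le, div_le_iff₀ hd02]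
      have hmul := mul_le_mul_of_nonneg_right hcon (le_of_lt hd12)
      have hring : condNE p (Wc (j + 1)) (Wc j) *
            ((Module.finrank F ↥(Wc (j + 2)) : ℝ) - (Module.finrank F ↥(Wc (j + 1)) : ℝ))
          + condNE p (Wc (j + 1)) (Wc j) *
            ((Module.finrank F ↥(Wc (j + 1)) : ℝ) - (Module.finrank F ↥(Wc j) : ℝ))
          = condNE p (Wc (j + 1)) (Wc j) *
            ((Module.finrank F ↥(Wc (j + 2)) : ℝ) - (Module.finrank F ↥(Wc j) : ℝ)) := by
        ring
      linarith
    have hge2 := h0.2.2.1 (Wc (j + 2)) hW2V h02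
    have heq2 := le_antisymm hle2 hge2
    have hle12 := h0.2.2.2 (Wc (j + 2)) hW2V h02 heq2
    exact absurd (lt_of_lt_of_le h12 hle12) (lt_irrefl _)
  · intro r' W' hch
    obtain ⟨h0', hr', hlt', hleV', hmin'⟩ := hch
    have heq : ∀ j, j ≤ min r r' → W' j = Wc j := by
      intro j
      induction j with
      | zero => intro _; rw [h0', hW0]
      | succ j ih =>
        intro hj
        have hjr : j < r := by omega
        have hjr' : j < r' := by omega
        have hbase := ih (by omega)
        have hs := step_spec _ (hWlt j hjr)
        rw [← hWsucc] at hs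
        have hm' := hmin' j hjr'
        have hlt1' : W' j < W' (j + 1) := hlt' j hjr'
        have hleV1' : W' (j + 1) ≤ V := hleV' (j + 1) (by omega)
        rw [hbase] at hm' hlt1'
        have hA : condNE p (W' (j + 1)) (Wc j) ≤ condNE p (Wc (j + 1)) (Wc j) :=
          hm'.1 (Wc (j + 1)) (hle (j + 1)) hs.2.1
        have hB : condNE p (Wc (j + 1)) (Wc j) ≤ condNE p (W' (j + 1)) (Wc j) :=
          hs.2.2.1 (W' (j + 1)) hleV1' hlt1'
        have hab := le_antisymm hA hB
        apply le_antisymm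
        · exact hs.2.2.2 (W' (j + 1)) hleV1' hlt1' hab
        · exact hm'.2 (Wc (j + 1)) (hle (j + 1)) hs.2.1 hab.symm
    have hrr : r' = r := by
      by_contra hne
      rcases Nat.lt_or_ge r' r with h | h
      · have hthis : W' r' = Wc r' := heq r' (by omega)
        rw [hr'] at hthis
        exact absurd hthis.symm (ne_of_lt (hWlt r' h))
      · have hlt2 : r < r' := by omega
        have hthis : W' r = Wc r := heq r (by omega)
        have hWrV : W' r = V := by rw [hthis, hWr]
        have h1 : W' r < W' (r + 1) := hlt' r hlt2
        have h2 : W' (r + 1) ≤ V := hleV' (r + 1) (by omega)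
        rw [hWrV] at h1
        exact absurd (lt_of_lt_of_le h1 h2) (lt_irrefl _)
    exact ⟨hrr, fun j hj => heq j (by omega)⟩
end

section
/- Let W be any subspace of V with W ⊆ W^(j) and W ⊄ W^(j-1), where {W^(j)} is the normalized-entropy subspace chain. Then for every subspace W' ⊇ W, max over U1 ⊊ W' of H_N(W'|U1) is at least H_N(W^(j)|W^(j-1)). Consequently the minimum over superspaces W' ⊇ W of the worst-case normalized conditional entropy equals H_N(W^(j)|W^(j-1)), attained at W' = W^(j). -/
open scoped BigOperators

/-!
Fix `s = H_N(W^(j) | W^(j-1))` and tilt the entropy to `g(U) = H(U) - s · dim U`, so that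
`H_N(U | W) ≤ s` iff `g(W ⊔ U) ≤ g(W)` whenever `W < U`. Entropy is submodular (Gibbs'
inequality against the coupling making two variables conditionally independent given a common
function) and dimension is modular, so `g` is submodular.

Lower bound: for `W' ⊇ W` take `U₁ = W^(j-1) ⊓ W'`, a proper subspace since `W ⊄ W^(j-1)`.
Submodularity gives `g(W') - g(U₁) ≥ g(W^(j-1) ⊔ W') - g(W^(j-1))`, which is `≥ 0` because
`W^(j)` minimizes `H_N(· | W^(j-1))`.

Upper bound: the slopes `H_N(W^(i+1) | W^(i))` increase with `i`, so for `i < j` the space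
`W^(i+1)` minimizes `g` on the interval `[W^(i), W^(i+1)]`. Adding `W^(1), …, W^(j)` to `U₁`
one at a time then never increases `g`, by submodularity, whence `g(W^(j)) ≤ g(U₁)`.
-/

open Finset Real

section Entropy

open Classical

variable {Ω α β γ : Type*} [Fintype Ω]

lemma mul_log_sub_log_le {t q : ℝ} (ht : 0 ≤ t) (hq : 0 ≤ q) (hpos : t ≠ 0 → 0 < q) :
    t * (log q - log t) ≤ q - t := by
  rcases ht.eq_or_lt with rfl | ht
  · simpa using hq
  have hq := hpos ht.ne'
  calc t * (log q - log t) = t * log (q / t) := by rw [log_div hq.ne' ht.ne']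
    _ ≤ t * (q / t - 1) := by gcongr; exact log_le_sub_one_of_pos (div_pos hq ht)
    _ = q - t := by field_simp

lemma sum_mul_logb_le_sum_mul_logb {ι : Type*} [Fintype ι] {t q : ι → ℝ}
    (ht : ∀ i, 0 ≤ t i) (hq : ∀ i, 0 ≤ q i) (hpos : ∀ i, t i ≠ 0 → 0 < q i)
    (hsum : ∑ i, q i ≤ ∑ i, t i) :
    ∑ i, t i * logb 2 (q i) ≤ ∑ i, t i * logb 2 (t i) := by
  have hlog : ∑ i, t i * log (q i) ≤ ∑ i, t i * log (t i) := by
    have hterm : ∑ i, t i * (log (q i) - log (t i)) ≤ ∑ i, (q i - t i) :=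
      sum_le_sum fun i _ => mul_log_sub_log_le (ht i) (hq i) (hpos i)
    simp only [mul_sub, sum_sub_distrib] at hterm
    linarith
  simp only [logb, ← mul_div_assoc, ← sum_div]
  exact div_le_div_of_nonneg_right hlog (log_nonneg one_le_two)

noncomputable def fiberMass (p : Ω → ℝ) (f : Ω → α) (a : α) : ℝ :=
  ∑ ω ∈ univ.filter (fun ω => f ω = a), p ω

variable {p : Ω → ℝ}

lemma fiberMass_nonneg (hp : ∀ ω, 0 ≤ p ω) (f : Ω → α) (a : α) : 0 ≤ fiberMass p f a :=
  sum_nonneg fun ω _ => hp ω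

lemma sum_fiberMass [Fintype α] (p : Ω → ℝ) (f : Ω → α) : ∑ a, fiberMass p f a = ∑ ω, p ω :=
  sum_fiberwise _ _ _

lemma sum_fiberMass_mul [Fintype α] (p : Ω → ℝ) (f : Ω → α) (c : α → ℝ) :
    ∑ a, fiberMass p f a * c a = ∑ ω, p ω * c (f ω) := by
  rw [← sum_fiberwise univ f fun ω => p ω * c (f ω)]
  refine sum_congr rfl fun a _ => ?_
  rw [fiberMass, sum_mul]
  exact sum_congr rfl fun ω hω => by rw [(mem_filter.1 hω).2]

lemma sum_fiberMass_of_comp_eq [Fintype α] (p : Ω → ℝ) (f : Ω → α) (φ : α → γ) (z : γ) :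
    ∑ a ∈ univ.filter (fun a => φ a = z), fiberMass p f a =
      fiberMass p (fun ω => φ (f ω)) z :=
  (sum_fiberwise_eq_sum_filter _ _ f p).trans
    (sum_congr (filter_congr fun ω _ => by simp) fun _ _ => rfl)

lemma fiberMass_le_fiberMass_comp (hp : ∀ ω, 0 ≤ p ω) (f : Ω → α) (φ : α → γ) (a : α) :
    fiberMass p f a ≤ fiberMass p (fun ω => φ (f ω)) (φ a) :=
  sum_le_sum_of_subset_of_nonneg (monotone_filter_right _ fun _ _ h => congrArg φ h)
    fun ω _ _ => hp ω

lemma exists_eq_of_fiberMass_ne_zero {f : Ω → α} {a : α} (h : fiberMass p f a ≠ 0) :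
    ∃ ω, f ω = a := by
  obtain ⟨ω, hω, -⟩ := exists_ne_zero_of_sum_ne_zero h
  exact ⟨ω, (mem_filter.1 hω).2⟩

lemma mapEnt_eq_neg_sum [Fintype α] (p : Ω → ℝ) (f : Ω → α) :
    mapEnt p f = -∑ ω, p ω * logb 2 (fiberMass p f (f ω)) := by
  rw [← sum_fiberMass_mul p f fun a => logb 2 (fiberMass p f a), ← sum_neg_distrib]
  rfl

lemma mapEnt_congr [Fintype α] [Fintype β] {f : Ω → α} {g : Ω → β}
    (hfg : ∀ ω ω', f ω = f ω' ↔ g ω = g ω') :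
    mapEnt p f = mapEnt p g := by
  have hfiber : ∀ ω, fiberMass p f (f ω) = fiberMass p g (g ω) := fun ω =>
    sum_congr (filter_congr fun ω' _ => hfg ω' ω) fun _ _ => rfl
  simp only [mapEnt_eq_neg_sum, hfiber]

/-- The joint law of `f` and `g` that makes them conditionally independent given their
common function `φ ∘ f = ψ ∘ g`. -/
noncomputable def condIndepMass (p : Ω → ℝ) (f : Ω → α) (g : Ω → β) (φ : α → γ) (ψ : β → γ)
    (x : α × β) : ℝ :=
  if φ x.1 = ψ x.2 then
    fiberMass p f x.1 * fiberMass p g x.2 / fiberMass p (fun ω => φ (f ω)) (φ x.1)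
  else 0

lemma condIndepMass_nonneg (hp : ∀ ω, 0 ≤ p ω) (f : Ω → α) (g : Ω → β) (φ : α → γ)
    (ψ : β → γ) (x : α × β) : 0 ≤ condIndepMass p f g φ ψ x := by
  unfold condIndepMass
  split_ifs
  · exact div_nonneg (mul_nonneg (fiberMass_nonneg hp _ _) (fiberMass_nonneg hp _ _))
      (fiberMass_nonneg hp _ _)
  · exact le_rfl

lemma sum_condIndepMass_le [Fintype α] [Fintype β] (hp : ∀ ω, 0 ≤ p ω) {f : Ω → α}
    {g : Ω → β} {φ : α → γ} {ψ : β → γ} (hφψ : ∀ ω, φ (f ω) = ψ (g ω)) :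
    ∑ x, condIndepMass p f g φ ψ x ≤ ∑ ω, p ω := by
  set PZ := fiberMass p fun ω => φ (f ω)
  have hg : ∀ a, ∑ b, (if φ a = ψ b then fiberMass p g b else 0) = PZ (φ a) := by
    intro a
    rw [← sum_filter, show PZ = fiberMass p fun ω => ψ (g ω) from funext fun z => by
      simp only [PZ, hφψ]]
    simp_rw [eq_comm (a := φ a)]
    exact sum_fiberMass_of_comp_eq p g ψ (φ a)
  calc ∑ x, condIndepMass p f g φ ψ x
      = ∑ a, fiberMass p f a * (PZ (φ a) / PZ (φ a)) := by
        rw [Fintype.sum_prod_type]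
        refine sum_congr rfl fun a _ => ?_
        calc ∑ b, condIndepMass p f g φ ψ (a, b)
            = ∑ b, fiberMass p f a * (if φ a = ψ b then fiberMass p g b else 0) / PZ (φ a) :=
              sum_congr rfl fun b _ => by unfold condIndepMass; split_ifs <;> simp [PZ]
          _ = fiberMass p f a * (PZ (φ a) / PZ (φ a)) := by
              rw [← sum_div, ← mul_sum, hg, mul_div_assoc]
    _ ≤ ∑ a, fiberMass p f a :=
        sum_le_sum fun a _ =>
          mul_le_of_le_one_right (fiberMass_nonneg hp f a) (div_self_le_one _)
    _ = ∑ ω, p ω := sum_fiberMass p f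

theorem mapEnt_prod_add_mapEnt_comp_le [Fintype α] [Fintype β] [Fintype γ]
    (hp : ∀ ω, 0 ≤ p ω) {f : Ω → α} {g : Ω → β} {φ : α → γ} {ψ : β → γ}
    (hφψ : ∀ ω, φ (f ω) = ψ (g ω)) :
    mapEnt p (fun ω => (f ω, g ω)) + mapEnt p (fun ω => φ (f ω)) ≤ mapEnt p f + mapEnt p g := by
  set J : Ω → α × β := fun ω => (f ω, g ω)
  set t := fiberMass p J
  set PA := fiberMass p f
  set PB := fiberMass p g
  set PZ := fiberMass p fun ω => φ (f ω)
  set Q := condIndepMass p f g φ ψ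
  have hsupp : ∀ x, t x ≠ 0 → 0 < Q x ∧
      logb 2 (Q x) = logb 2 (PA x.1) + logb 2 (PB x.2) - logb 2 (PZ (φ x.1)) := by
    intro x hx
    have ht : 0 < t x := (fiberMass_nonneg hp J x).lt_of_ne' hx
    have hA : 0 < PA x.1 := ht.trans_le (fiberMass_le_fiberMass_comp hp J Prod.fst x)
    have hB : 0 < PB x.2 := ht.trans_le (fiberMass_le_fiberMass_comp hp J Prod.snd x)
    have hZ : 0 < PZ (φ x.1) := hA.trans_le (fiberMass_le_fiberMass_comp hp f φ x.1)
    obtain ⟨ω, rfl⟩ := exists_eq_of_fiberMass_ne_zero hx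
    have hQ : Q (J ω) = PA (f ω) * PB (g ω) / PZ (φ (f ω)) := if_pos (hφψ ω)
    rw [hQ]
    exact ⟨by positivity, by rw [logb_div (by positivity) hZ.ne', logb_mul hA.ne' hB.ne']⟩
  have hgibbs : ∑ x, t x * logb 2 (Q x) ≤ ∑ x, t x * logb 2 (t x) :=
    sum_mul_logb_le_sum_mul_logb (fiberMass_nonneg hp J) (condIndepMass_nonneg hp f g φ ψ)
      (fun x hx => (hsupp x hx).1)
      ((sum_condIndepMass_le hp hφψ).trans (sum_fiberMass p J).ge)
  have hQ : ∑ x, t x * logb 2 (Q x) = ∑ x, t x * logb 2 (PA x.1) + ∑ x, t x * logb 2 (PB x.2)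
      - ∑ x, t x * logb 2 (PZ (φ x.1)) := by
    rw [← sum_add_distrib, ← sum_sub_distrib]
    refine sum_congr rfl fun x _ => ?_
    by_cases hx : t x = 0
    · simp [hx]
    · rw [(hsupp x hx).2]
      ring
  have hJ : mapEnt p J = -∑ x, t x * logb 2 (t x) := by
    rw [mapEnt_eq_neg_sum, sum_fiberMass_mul]
  have hA : mapEnt p f = -∑ x, t x * logb 2 (PA x.1) := by
    rw [mapEnt_eq_neg_sum, sum_fiberMass_mul]
  have hB : mapEnt p g = -∑ x, t x * logb 2 (PB x.2) := by
    rw [mapEnt_eq_neg_sum, sum_fiberMass_mul]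
  have hZ : mapEnt p (fun ω => φ (f ω)) = -∑ x, t x * logb 2 (PZ (φ x.1)) := by
    rw [mapEnt_eq_neg_sum, sum_fiberMass_mul]
  linarith

end Entropy

lemma eval_eq_eval_iff_le_ker {R ι : Type*} [CommRing R] (U : Submodule R (ι → R)) (i i' : ι) :
    (fun u : U => (u : ι → R) i) = (fun u : U => (u : ι → R) i') ↔
      U ≤ LinearMap.ker
        (LinearMap.proj (R := R) (φ := fun _ : ι => R) i - LinearMap.proj i') := by
  simp [funext_iff, SetLike.le_def, sub_eq_zero]

lemma finrank_sub_finrank_pos {K E : Type*} [DivisionRing K] [AddCommGroup E] [Module K E]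
    [FiniteDimensional K E] {U W : Submodule K E} (h : W < U) :
    0 < (Module.finrank K U : ℝ) - Module.finrank K W :=
  sub_pos.2 (by exact_mod_cast Submodule.finrank_lt_finrank_of_lt h)

section Subspace

open Classical

variable {F Ω : Type*} [Field F] [Fintype F] [Fintype Ω] {p : Ω → ℝ}

lemma subEnt_sup (p : Ω → ℝ) (A B : Submodule F (Ω → F)) :
    subEnt p (A ⊔ B) =
      mapEnt p fun ω => ((fun a : A => (a : Ω → F) ω), (fun b : B => (b : Ω → F) ω)) :=
  mapEnt_congr fun ω ω' => by
    simp only [Prod.ext_iff, eval_eq_eval_iff_le_ker, sup_le_iff]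

theorem subEnt_sup_add_subEnt_inf_le (hp : ∀ ω, 0 ≤ p ω) (A B : Submodule F (Ω → F)) :
    subEnt p (A ⊔ B) + subEnt p (A ⊓ B) ≤ subEnt p A + subEnt p B := by
  rw [subEnt_sup]
  exact mapEnt_prod_add_mapEnt_comp_le hp
    (φ := fun (e : A → F) (u : ↥(A ⊓ B)) => e ⟨u, (Submodule.mem_inf.1 u.2).1⟩)
    (ψ := fun (e : B → F) (u : ↥(A ⊓ B)) => e ⟨u, (Submodule.mem_inf.1 u.2).2⟩) fun _ => rfl

noncomputable def tiltedEnt (p : Ω → ℝ) (s : ℝ) (U : Submodule F (Ω → F)) : ℝ :=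
  subEnt p U - s * Module.finrank F U

theorem tiltedEnt_sup_add_tiltedEnt_inf_le (hp : ∀ ω, 0 ≤ p ω) (s : ℝ)
    (A B : Submodule F (Ω → F)) :
    tiltedEnt p s (A ⊔ B) + tiltedEnt p s (A ⊓ B) ≤ tiltedEnt p s A + tiltedEnt p s B := by
  have hdim : (Module.finrank F ↥(A ⊔ B) : ℝ) + Module.finrank F ↥(A ⊓ B) =
      Module.finrank F A + Module.finrank F B := by
    exact_mod_cast Submodule.finrank_sup_add_finrank_inf_eq A B
  have := subEnt_sup_add_subEnt_inf_le hp A B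
  unfold tiltedEnt
  linear_combination this - s * hdim

lemma condNE_le_iff {U W : Submodule F (Ω → F)} (h : W < U) {s : ℝ} :
    condNE p U W ≤ s ↔ tiltedEnt p s U ≤ tiltedEnt p s W := by
  rw [condNE, sup_eq_right.2 h.le, div_le_iff₀ (finrank_sub_finrank_pos h), tiltedEnt, tiltedEnt]
  constructor <;> intro <;> linarith

lemma le_condNE_iff {U W : Submodule F (Ω → F)} (h : W < U) {s : ℝ} :
    s ≤ condNE p U W ↔ tiltedEnt p s W ≤ tiltedEnt p s U := by
  rw [condNE, sup_eq_right.2 h.le, le_div_iff₀ (finrank_sub_finrank_pos h), tiltedEnt, tiltedEnt]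
  constructor <;> intro <;> linarith

end Subspace

namespace IsNEChain

variable {F Ω : Type*} [Field F] [Fintype F] [Fintype Ω] {p : Ω → ℝ} {V : Submodule F (Ω → F)}
  {r : ℕ} {Wc : ℕ → Submodule F (Ω → F)}

lemma lt_succ (hchain : IsNEChain p V r Wc) {i : ℕ} (hi : i < r) : Wc i < Wc (i + 1) :=
  hchain.2.2.1 i hi

lemma le_ambient (hchain : IsNEChain p V r Wc) {i : ℕ} (hi : i ≤ r) : Wc i ≤ V :=
  hchain.2.2.2.1 i hi

lemma tiltedEnt_le (hchain : IsNEChain p V r Wc) {i : ℕ} (hi : i < r)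
    {Z : Submodule F (Ω → F)} (hZ : Wc i ≤ Z) (hZV : Z ≤ V) :
    tiltedEnt p (condNE p (Wc (i + 1)) (Wc i)) (Wc i) ≤
      tiltedEnt p (condNE p (Wc (i + 1)) (Wc i)) Z := by
  rcases hZ.lt_or_eq with hlt | rfl
  · exact (le_condNE_iff hlt).1 ((hchain.2.2.2.2 i hi).1 Z hZV hlt)
  · exact le_rfl

lemma tiltedEnt_succ (hchain : IsNEChain p V r Wc) {i : ℕ} (hi : i < r) :
    tiltedEnt p (condNE p (Wc (i + 1)) (Wc i)) (Wc (i + 1)) =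
      tiltedEnt p (condNE p (Wc (i + 1)) (Wc i)) (Wc i) :=
  le_antisymm ((condNE_le_iff (hchain.lt_succ hi)).1 le_rfl)
    ((le_condNE_iff (hchain.lt_succ hi)).1 le_rfl)

lemma condNE_succ_le_condNE_succ (hchain : IsNEChain p V r Wc) {i : ℕ} (hi : i + 1 < r) :
    condNE p (Wc (i + 1)) (Wc i) ≤ condNE p (Wc (i + 2)) (Wc (i + 1)) := by
  rw [le_condNE_iff (hchain.lt_succ hi), hchain.tiltedEnt_succ (by omega)]
  exact hchain.tiltedEnt_le (by omega) ((hchain.lt_succ (i := i) (by omega)).trans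
    (hchain.lt_succ hi)).le (hchain.le_ambient hi)

lemma condNE_succ_mono (hchain : IsNEChain p V r Wc) {i k : ℕ} (hik : i ≤ k) (hk : k < r) :
    condNE p (Wc (i + 1)) (Wc i) ≤ condNE p (Wc (k + 1)) (Wc k) := by
  induction k, hik using Nat.le_induction with
  | base => exact le_rfl
  | succ k _ ih => exact (ih (by omega)).trans (hchain.condNE_succ_le_condNE_succ hk)

lemma tiltedEnt_succ_le (hchain : IsNEChain p V r Wc) {i : ℕ} (hi : i < r) {s : ℝ}
    (hs : condNE p (Wc (i + 1)) (Wc i) ≤ s) {Z : Submodule F (Ω → F)} (hZ : Wc i ≤ Z)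
    (hZ' : Z ≤ Wc (i + 1)) :
    tiltedEnt p s (Wc (i + 1)) ≤ tiltedEnt p s Z := by
  have hmin := hchain.tiltedEnt_le hi hZ (hZ'.trans (hchain.le_ambient hi))
  rw [← hchain.tiltedEnt_succ hi] at hmin
  have hdim : (Module.finrank F Z : ℝ) ≤ Module.finrank F (Wc (i + 1)) := by
    exact_mod_cast Submodule.finrank_mono hZ'
  have := mul_le_mul_of_nonneg_left hdim (sub_nonneg.2 hs)
  unfold tiltedEnt at hmin ⊢
  linarith

lemma tiltedEnt_sup_le (hchain : IsNEChain p V r Wc) (hp : ∀ ω, 0 ≤ p ω) {j : ℕ} (hjr : j ≤ r)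
    {s : ℝ} (hs : ∀ i < j, condNE p (Wc (i + 1)) (Wc i) ≤ s) (U : Submodule F (Ω → F)) :
    ∀ i ≤ j, tiltedEnt p s (U ⊔ Wc i) ≤ tiltedEnt p s U := by
  intro i
  induction i with
  | zero => intro; rw [hchain.1, sup_bot_eq]
  | succ i ih =>
    intro hi
    have hstep : Wc i ≤ Wc (i + 1) := (hchain.lt_succ (i := i) (by omega)).le
    have hsup : U ⊔ Wc (i + 1) = (U ⊔ Wc i) ⊔ Wc (i + 1) := by
      rw [sup_assoc, sup_eq_right.2 hstep]
    have hsub := tiltedEnt_sup_add_tiltedEnt_inf_le hp s (U ⊔ Wc i) (Wc (i + 1))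
    have hinf := hchain.tiltedEnt_succ_le (by omega) (hs i hi)
      (le_inf le_sup_right hstep) (inf_le_right (a := U ⊔ Wc i))
    rw [hsup]
    linarith [ih (by omega)]

end IsNEChain

theorem stmt_10_general {F Ω : Type*} [Field F] [Fintype F] [Fintype Ω]
    (p : Ω → ℝ) (hp : ∀ ω, 0 ≤ p ω)
    (V : Submodule F (Ω → F))
    (r : ℕ) (Wc : ℕ → Submodule F (Ω → F)) (hchain : IsNEChain p V r Wc)
    (j : ℕ) (hj1 : 1 ≤ j) (hjr : j ≤ r)
    (W : Submodule F (Ω → F)) (hWj1 : ¬ W ≤ Wc (j - 1)) :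
    (∀ W' : Submodule F (Ω → F), W ≤ W' → W' ≤ V →
        ∃ U1 : Submodule F (Ω → F), U1 < W' ∧
          condNE p (Wc j) (Wc (j - 1)) ≤ condNE p W' U1) ∧
      (∀ U1 : Submodule F (Ω → F), U1 < Wc j →
        condNE p (Wc j) U1 ≤ condNE p (Wc j) (Wc (j - 1))) := by
  obtain ⟨k, rfl⟩ : ∃ k, j = k + 1 := ⟨j - 1, by omega⟩
  rw [Nat.add_sub_cancel] at hWj1 ⊢
  set s := condNE p (Wc (k + 1)) (Wc k)
  refine ⟨fun W' hWW' hW'V => ?_, fun U1 hU1 => ?_⟩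
  · have hlt : Wc k ⊓ W' < W' :=
      inf_le_right.lt_of_ne fun h => hWj1 (hWW'.trans (inf_eq_right.1 h))
    refine ⟨Wc k ⊓ W', hlt, ?_⟩
    -- passing from `Wc k ⊓ W'` to `W'` costs at least as much as from `Wc k` to `Wc k ⊔ W'`
    rw [le_condNE_iff hlt]
    have hmin := hchain.tiltedEnt_le (by omega) le_sup_left
      (sup_le (hchain.le_ambient (i := k) (by omega)) hW'V)
    linarith [tiltedEnt_sup_add_tiltedEnt_inf_le hp s (Wc k) W']
  · rw [condNE_le_iff hU1]
    calc tiltedEnt p s (Wc (k + 1)) = tiltedEnt p s (U1 ⊔ Wc (k + 1)) := by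
          rw [sup_eq_right.2 hU1.le]
      _ ≤ tiltedEnt p s U1 := hchain.tiltedEnt_sup_le hp hjr
          (fun i hi => hchain.condNE_succ_mono (by omega) (by omega)) U1 (k + 1) le_rfl

/-- Let `W ⊆ W^(j)` with `W ⊄ W^(j-1)`. Then every superspace `W' ⊇ W` (within `V`) has
worst-case normalized conditional entropy at least `H_N(W^(j)|W^(j-1))`, and this value
is attained at `W' = W^(j)`: the minimum over superspaces of the worst-case normalized
conditional entropy equals `H_N(W^(j)|W^(j-1))`. -/
theorem stmt_10 {F Ω : Type*} [Field F] [Fintype F] [Fintype Ω]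
    (p : Ω → ℝ) (hp : ∀ ω, 0 ≤ p ω) (hpsum : ∑ ω, p ω = 1)
    {m : ℕ} (X : Fin m → (Ω → F)) (hX : LinearIndependent F X)
    (V : Submodule F (Ω → F)) (hV : V = Submodule.span F (Set.range X))
    (r : ℕ) (Wc : ℕ → Submodule F (Ω → F)) (hchain : IsNEChain p V r Wc)
    (j : ℕ) (hj1 : 1 ≤ j) (hjr : j ≤ r)
    (W : Submodule F (Ω → F)) (hWj : W ≤ Wc j) (hWj1 : ¬ W ≤ Wc (j - 1)) :
    (∀ W' : Submodule F (Ω → F), W ≤ W' → W' ≤ V →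
        ∃ U1 : Submodule F (Ω → F), U1 < W' ∧
          condNE p (Wc j) (Wc (j - 1)) ≤ condNE p W' U1) ∧
      (∀ U1 : Submodule F (Ω → F), U1 < Wc j →
        condNE p (Wc j) U1 ≤ condNE p (Wc j) (Wc (j - 1))) :=
  stmt_10_general p hp V r Wc hchain j hj1 hjr W hWj1
end
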